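/- Less is more: if u ∼_L xy, then for all v ∈ Σ⁺, col_u(v) ≥ col_x(yv). In particular, if y is u-invariant, then col_u(v) ≥ col_u(yv) for all v ∈ Σ⁺. -/

import Mathlib

open scoped Classical

/-- Concatenation of a finite word with an infinite word. -/
def wcat {A : Type} (u : List A) (w : ℕ → A) : ℕ → A :=
  fun n => if h : n < u.length then u.get ⟨n, h⟩ else w (n - u.length)

/-- The infinite periodic word `v^ω`. -/
def wpow {A : Type} [Inhabited A] (v : List A) : ℕ → A :=
  fun n => v.getD (n % v.length) default

/-- The ultimately periodic word `u · v^ω`. -/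
def upw {A : Type} [Inhabited A] (u v : List A) : ℕ → A := wcat u (wpow v)

/-- The finite word `v^i`. -/
def wrep {A : Type} (v : List A) (i : ℕ) : List A := (List.replicate i v).flatten

/-- The right congruence `x ∼_L y`. -/
def simL {A : Type} (L : Set (ℕ → A)) (x y : List A) : Prop :=
  ∀ w : ℕ → A, wcat x w ∈ L ↔ wcat y w ∈ L

/-- `w` is `u`-invariant: `u ∼_L u·w`. -/
def UInv {A : Type} (L : Set (ℕ → A)) (u w : List A) : Prop := simL L u (u ++ w)

/-- `v` is relevant to `u`. -/
def URel {A : Type} (L : Set (ℕ → A)) (u v : List A) : Prop :=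
  ∃ z : List A, UInv L u (v ++ z)

/-- `v` has natural color at most `c` wrt `u`. -/
def ColorAtMost {A : Type} [Inhabited A] (L : Set (ℕ → A)) (u : List A) :
    ℕ → List A → Prop
  | c, v => ∀ z : List A, UInv L u (v ++ z) →
      ((upw u (v ++ z) ∈ L ↔ Even c) ∨
        ∃ i : ℕ, 0 < i ∧ ∃ c' : Fin c, ColorAtMost L u c' (wrep (v ++ z) i))
  termination_by c => c
  decreasing_by exact c'.isLt

/-- The natural color of the finite word `v` wrt `u`: `⊥` (i.e. `-∞`) if `v` is
irrelevant to `u`, and otherwise the minimal `c ≥ 0` as in the paper. -/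
noncomputable def ncol {A : Type} [Inhabited A] (L : Set (ℕ → A)) (u v : List A) :
    WithBot ℕ :=
  if URel L u v then ((sInf {c : ℕ | ColorAtMost L u c v} : ℕ) : WithBot ℕ) else ⊥

/-- `v` is stable wrt `u`. -/
def Stable {A : Type} [Inhabited A] (L : Set (ℕ → A)) (u v : List A) : Prop :=
  ∀ i : ℕ, 0 < i → ncol L u v = ncol L u (wrep v i)

/-- `v` is `u`-reliable. -/
def UReliable {A : Type} [Inhabited A] (L : Set (ℕ → A)) (u v : List A) : Prop :=
  UInv L u v ∧ Stable L u v

/-- The natural color of an ultimately periodic infinite word. -/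
noncomputable def icol {A : Type} [Inhabited A] (L : Set (ℕ → A)) (w : ℕ → A) : ℕ :=
  sInf {c : ℕ | ∃ u v : List A, v ≠ [] ∧ w = upw u v ∧ UInv L u v ∧
    ncol L u v = (c : WithBot ℕ)}

/-- The set of states visited infinitely often by a run. -/
def infSet {Q : Type} (r : ℕ → Q) : Set Q := {q | ∀ n : ℕ, ∃ m : ℕ, n ≤ m ∧ r m = q}

/-- The run of a complete deterministic automaton on an infinite word. -/
def runOf {A Q : Type} (δ : Q → A → Q) (q0 : Q) (w : ℕ → A) : ℕ → Q
  | 0 => q0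
  | n + 1 => δ (runOf δ q0 w n) (w n)

/-- `L` is ω-regular: recognized by some deterministic Muller automaton. -/
def OmegaRegular {A : Type} (L : Set (ℕ → A)) : Prop :=
  ∃ (Q : Type) (_ : Fintype Q) (q0 : Q) (δ : Q → A → Q) (α : Set (Set Q)),
    ∀ w : ℕ → A, w ∈ L ↔ infSet (runOf δ q0 w) ∈ α

/-!
If `u ∼_L xy` and `yvz` is `x`-invariant, then `v(zy)` is `u`-invariant, `x(yvz)^ω = xy(vzy)^ω`
is in `L` iff `u(vzy)^ω` is, and `(yvz)^(i+1) = y (vzy)^i vz`. So instantiating the definition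
of `col_u(v) ≤ c` at `zy` and inducting on `c` shows that `col_u(v) ≤ c` implies
`col_x(yv) ≤ c`.

This only gives `col_x(yv) ≤ col_u(v)` once `col_u(v)` is known to exist (an empty `sInf` is
`0`), and that is where ω-regularity enters. Fix a deterministic Muller automaton for `L` and
record, for a finite word `w`, the state reached and the states visited while reading `w` from
each state. If this profile of `E` is idempotent, the states seen infinitely often on `u E^ω`
are those visited along `E` from the state reached on `u E`. For a nonempty word `F = E s` with
idempotent profile, either `F Y` has the profile of `E` for some `Y` (and then `u E^ω` and
`u F^ω` have the same infinity set), or the profiles reachable by extending `F` form a strict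
subset of those for `E`. Induction on the number of reachable profiles bounds the colors of
idempotent words, and every word has an idempotent power.
-/

section Words

variable {A : Type}

theorem wcat_nil (w : ℕ → A) : wcat [] w = w := by
  funext n
  simp [wcat]

theorem wcat_append (a b : List A) (w : ℕ → A) : wcat (a ++ b) w = wcat a (wcat b w) := by
  funext n
  simp only [wcat, List.length_append]
  rcases lt_or_ge n a.length with h1 | h1
  · rw [dif_pos (by omega), dif_pos h1]
    simp [List.getElem_append_left h1]
  · rw [dif_neg (by omega : ¬ n < a.length)]
    rcases lt_or_ge n (a.length + b.length) with h2 | h2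
    · rw [dif_pos h2, dif_pos (by omega : n - a.length < b.length)]
      simp [List.getElem_append_right h1]
    · rw [dif_neg (by omega : ¬ n - a.length < b.length), dif_neg (by omega)]
      congr 1
      omega

theorem eq_of_wcat_eq_self {W : List A} (hW : W ≠ []) {w w' : ℕ → A} (hw : wcat W w = w)
    (hw' : wcat W w' = w') : w = w' := by
  have hlen : 0 < W.length := List.length_pos_iff.mpr hW
  funext n
  induction n using Nat.strong_induction_on with
  | _ n ih =>
    rw [← hw, ← hw']
    unfold wcat
    split_ifs
    · rfl
    · exact ih _ (by omega)

theorem wrep_add (W : List A) (a b : ℕ) : wrep W (a + b) = wrep W a ++ wrep W b := by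
  rw [wrep, wrep, wrep, List.replicate_add, List.flatten_append]

theorem wrep_succ (W : List A) (i : ℕ) : wrep W (i + 1) = W ++ wrep W i := by
  rw [add_comm, wrep_add]
  simp [wrep]

theorem wrep_ne_nil {W : List A} (hW : W ≠ []) {i : ℕ} (hi : 0 < i) : wrep W i ≠ [] := by
  obtain ⟨k, rfl⟩ := Nat.exists_eq_add_one_of_ne_zero hi.ne'
  simp [wrep_succ, hW]

theorem wrep_succ_append_append (y v z : List A) (i : ℕ) :
    wrep (y ++ v ++ z) (i + 1) = y ++ (wrep (v ++ (z ++ y)) i ++ (v ++ z)) := by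
  induction i with
  | zero => simp [wrep]
  | succ n ih =>
    rw [wrep_succ _ (n + 1), ih, wrep_succ (v ++ (z ++ y)) n]
    simp

variable [Inhabited A]

theorem wcat_wpow (W : List A) : wcat W (wpow W) = wpow W := by
  funext n
  simp only [wcat, wpow]
  split_ifs with h
  · rw [Nat.mod_eq_of_lt h, List.getD_eq_getElem _ _ h]
    rfl
  · rw [Nat.mod_eq_sub_mod (not_lt.mp h)]

theorem wpow_eq_of_wcat_eq_self {W : List A} (hW : W ≠ []) {w : ℕ → A} (hw : wcat W w = w) :
    wpow W = w :=
  eq_of_wcat_eq_self hW (wcat_wpow W) hw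

theorem wpow_append (a b : List A) : wpow (a ++ b) = wcat a (wpow (b ++ a)) := by
  rcases eq_or_ne (a ++ b) [] with hab | hab
  · obtain ⟨rfl, rfl⟩ := List.append_eq_nil_iff.mp hab
    rw [wcat_nil]
  · apply wpow_eq_of_wcat_eq_self hab
    rw [wcat_append, ← wcat_append b a, wcat_wpow]

theorem wcat_wrep_wpow (W : List A) (i : ℕ) : wcat (wrep W i) (wpow W) = wpow W := by
  induction i with
  | zero => simp [wrep, wcat_nil]
  | succ n ih => rw [wrep_succ, wcat_append, ih, wcat_wpow]

theorem wpow_wrep (W : List A) {i : ℕ} (hi : 0 < i) : wpow (wrep W i) = wpow W := by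
  rcases eq_or_ne W [] with rfl | hW
  · simp [wrep]
  · exact wpow_eq_of_wcat_eq_self (wrep_ne_nil hW hi) (wcat_wrep_wpow W i)

theorem upw_wrep (u W : List A) {i : ℕ} (hi : 0 < i) : upw u (wrep W i) = upw u W := by
  rw [upw, upw, wpow_wrep W hi]

end Words

section Transfer

variable {A : Type} {L : Set (ℕ → A)} {u x y : List A}

theorem UInv.rotate (h : simL L u (x ++ y)) {v z : List A} (hz : UInv L x (y ++ v ++ z)) :
    UInv L u (v ++ (z ++ y)) := by
  intro ζ
  have h1 := h ζ
  have h2 := h (wcat (v ++ (z ++ y)) ζ)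
  have h3 := hz (wcat y ζ)
  simp only [wcat_append] at h1 h2 h3 ⊢
  tauto

theorem URel.of_simL_append (h : simL L u (x ++ y)) {v : List A} (hv : URel L x (y ++ v)) :
    URel L u v :=
  let ⟨z, hz⟩ := hv
  ⟨z ++ y, hz.rotate h⟩

variable [Inhabited A]

theorem upw_mem_iff_rotate (h : simL L u (x ++ y)) (v z : List A) :
    upw x (y ++ v ++ z) ∈ L ↔ upw u (v ++ (z ++ y)) ∈ L := by
  have hrot : upw x (y ++ v ++ z) = wcat (x ++ y) (wpow (v ++ (z ++ y))) := by
    rw [upw, List.append_assoc, wpow_append, List.append_assoc, wcat_append]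
  rw [hrot, upw]
  exact (h _).symm

theorem ColorAtMost.append {c : ℕ} {w : List A} (s : List A) (hw : ColorAtMost L u c w) :
    ColorAtMost L u c (w ++ s) := by
  rw [ColorAtMost] at hw ⊢
  intro z hz
  simp only [List.append_assoc] at hz ⊢
  exact hw (s ++ z) hz

theorem ColorAtMost.of_simL_append (h : simL L u (x ++ y)) {c : ℕ} {v : List A}
    (hv : ColorAtMost L u c v) : ColorAtMost L x c (y ++ v) := by
  induction c using Nat.strong_induction_on generalizing v with
  | _ c IH =>
    rw [ColorAtMost] at hv ⊢
    intro z hz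
    rcases hv (z ++ y) (hz.rotate h) with hmem | ⟨i, hi, c', hc'⟩
    · exact Or.inl ((upw_mem_iff_rotate h v z).trans hmem)
    · refine Or.inr ⟨i + 1, i.succ_pos, c', ?_⟩
      rw [wrep_succ_append_append]
      exact IH c' c'.isLt (hc'.append (v ++ z))

end Transfer

theorem infSet_comp_add {Q : Type} (r : ℕ → Q) (k : ℕ) :
    infSet (fun n => r (k + n)) = infSet r := by
  ext q
  constructor
  · intro hq n
    obtain ⟨m, hm, hrm⟩ := hq n
    exact ⟨k + m, by omega, hrm⟩
  · intro hq n
    obtain ⟨m, hm, hrm⟩ := hq (k + n)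
    refine ⟨m - k, by omega, ?_⟩
    show r (k + (m - k)) = q
    rwa [Nat.add_sub_cancel' (by omega)]

theorem Function.Periodic.infSet_eq_range {Q : Type} {r : ℕ → Q} {P : ℕ}
    (hr : Function.Periodic r P) (hP : 0 < P) : infSet r = Set.range r := by
  ext q
  constructor
  · intro hq
    obtain ⟨m, -, hm⟩ := hq 0
    exact ⟨m, hm⟩
  · rintro ⟨m, rfl⟩ n
    exact ⟨m + n * P, by nlinarith, hr.nat_mul n m⟩

section Automaton

variable {A Q : Type} (δ : Q → A → Q)

def readWord (q : Q) (w : List A) : Q := w.foldl δ q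

def visited (q : Q) (w : List A) : Set Q := {p | ∃ t, t <+: w ∧ readWord δ q t = p}

def profile (w : List A) : Q → Q × Set Q := fun q => (readWord δ q w, visited δ q w)

def extensionProfiles (E : List A) : Set (Q → Q × Set Q) :=
  Set.range fun Y => profile δ (E ++ Y)

variable {δ}

theorem readWord_append (q : Q) (s t : List A) :
    readWord δ q (s ++ t) = readWord δ (readWord δ q s) t :=
  List.foldl_append

theorem visited_append (q : Q) (s t : List A) :
    visited δ q (s ++ t) = visited δ q s ∪ visited δ (readWord δ q s) t := by
  ext p
  constructor
  · rintro ⟨l, hl, rfl⟩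
    rcases le_or_gt l.length s.length with hle | hlt
    · exact Or.inl ⟨l, List.prefix_of_prefix_length_le hl (s.prefix_append t) hle, rfl⟩
    · obtain ⟨l', rfl⟩ := List.prefix_of_prefix_length_le (s.prefix_append t) hl hlt.le
      exact Or.inr ⟨l', (List.prefix_append_right_inj s).mp hl, by rw [readWord_append]⟩
  · rintro (⟨l, hl, rfl⟩ | ⟨l, hl, rfl⟩)
    · exact ⟨l, hl.trans (s.prefix_append t), rfl⟩
    · exact ⟨s ++ l, by simpa using hl, by rw [readWord_append]⟩

theorem visited_subset_append (q : Q) (s t : List A) :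
    visited δ q s ⊆ visited δ q (s ++ t) := by
  rw [visited_append]
  exact Set.subset_union_left

theorem visited_subset_of_readWord_eq {W : List A}
    (hW : ∀ q, visited δ q (W ++ W) = visited δ q W) {a b : Q} (hab : readWord δ a W = b) :
    visited δ b W ⊆ visited δ a W := by
  rw [← hW a, visited_append, hab]
  exact Set.subset_union_right

theorem profile_eq_iff {a b : List A} :
    profile δ a = profile δ b ↔
      ∀ q, readWord δ q a = readWord δ q b ∧ visited δ q a = visited δ q b := by
  simp only [profile, funext_iff, Prod.ext_iff]

theorem profile_append_congr {a b : List A} (h : profile δ a = profile δ b) (c : List A) :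
    profile δ (a ++ c) = profile δ (b ++ c) := by
  rw [profile_eq_iff] at h ⊢
  intro q
  simp only [readWord_append, visited_append, (h q).1, (h q).2, and_self]

theorem extensionProfiles_append_subset (E s : List A) :
    extensionProfiles δ (E ++ s) ⊆ extensionProfiles δ E := by
  rintro _ ⟨Y, rfl⟩
  exact ⟨s ++ Y, by simp only [List.append_assoc]⟩

theorem exists_profile_wrep_idempotent [Finite Q] (δ : Q → A → Q) (W : List A) :
    ∃ i, 0 < i ∧ profile δ (wrep W i ++ wrep W i) = profile δ (wrep W i) := by
  obtain ⟨a, b, hab, heq⟩ := Finite.exists_ne_map_eq_of_infinite fun i => profile δ (wrep W i)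
  wlog hlt : a < b generalizing a b
  · exact this b a hab.symm heq.symm (by omega)
  obtain ⟨d, rfl⟩ := Nat.exists_eq_add_of_lt hlt
  have hstep : ∀ m, a ≤ m → profile δ (wrep W (m + (d + 1))) = profile δ (wrep W m) := by
    intro m hm
    obtain ⟨k, rfl⟩ := Nat.exists_eq_add_of_le hm
    rw [show a + k + (d + 1) = a + d + 1 + k by ring, wrep_add W (a + d + 1), wrep_add W a]
    exact profile_append_congr heq.symm _
  have hiter :
      ∀ j m, a ≤ m → profile δ (wrep W (m + j * (d + 1))) = profile δ (wrep W m) := by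
    intro j
    induction j with
    | zero => simp
    | succ j ih =>
      intro m hm
      rw [add_mul, one_mul, ← add_assoc, hstep _ (by omega), ih m hm]
  refine ⟨(a + 1) * (d + 1), by positivity, ?_⟩
  rw [← wrep_add, hiter _ _ (by nlinarith)]

theorem runOf_wcat_of_le (q : Q) (s : List A) (w : ℕ → A) {n : ℕ} (hn : n ≤ s.length) :
    runOf δ q (wcat s w) n = readWord δ q (s.take n) := by
  induction n with
  | zero => simp [runOf, readWord]
  | succ n ih =>
    have hlt : n < s.length := by omega
    have hw : wcat s w n = s[n] := dif_pos hlt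
    rw [runOf, ih (by omega), hw, readWord, readWord, List.take_add_one,
      List.getElem?_eq_getElem hlt, Option.toList_some, List.foldl_append]
    rfl

theorem runOf_wcat_add (q : Q) (s : List A) (w : ℕ → A) (n : ℕ) :
    runOf δ q (wcat s w) (s.length + n) = runOf δ (readWord δ q s) w n := by
  induction n with
  | zero => simpa [runOf] using runOf_wcat_of_le q s w le_rfl
  | succ n ih =>
    have hw : wcat s w (s.length + n) = w n := by simp [wcat]
    rw [← add_assoc, runOf, runOf, ih, hw]

theorem infSet_runOf_wcat (q : Q) (s : List A) (w : ℕ → A) :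
    infSet (runOf δ q (wcat s w)) = infSet (runOf δ (readWord δ q s) w) := by
  rw [← infSet_comp_add _ s.length]
  simp only [runOf_wcat_add]

variable [Inhabited A]

theorem infSet_runOf_wpow {q : Q} {W : List A} (hW : W ≠ []) (hq : readWord δ q W = q) :
    infSet (runOf δ q (wpow W)) = visited δ q W := by
  have hprefix : ∀ n ≤ W.length, runOf δ q (wpow W) n = readWord δ q (W.take n) := by
    intro n hn
    rw [← wcat_wpow W]
    exact runOf_wcat_of_le q W _ hn
  have hper : Function.Periodic (runOf δ q (wpow W)) W.length := by
    intro n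
    conv_lhs => rw [add_comm, ← wcat_wpow W]
    rw [runOf_wcat_add, hq]
  have hlen : 0 < W.length := List.length_pos_iff.mpr hW
  rw [hper.infSet_eq_range hlen]
  ext p
  constructor
  · rintro ⟨n, rfl⟩
    rw [← Nat.mod_add_div' n W.length, ← Nat.cast_id (n / W.length), hper.nat_mul,
      hprefix _ (Nat.mod_lt n hlen).le]
    exact ⟨_, List.take_prefix _ _, rfl⟩
  · rintro ⟨t, ht, rfl⟩
    refine ⟨t.length, ?_⟩
    rw [hprefix _ ht.length_le, ← List.prefix_iff_eq_take.mp ht]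

theorem infSet_runOf_upw (q0 : Q) (u : List A) {W : List A} (hW : W ≠ [])
    (hidem : ∀ q, readWord δ q (W ++ W) = readWord δ q W) :
    infSet (runOf δ q0 (upw u W)) = visited δ (readWord δ (readWord δ q0 u) W) W := by
  rw [upw, infSet_runOf_wcat, ← wcat_wpow W, infSet_runOf_wcat,
    infSet_runOf_wpow hW (by rw [← readWord_append, hidem])]

variable {L : Set (ℕ → A)} {q0 : Q} {α : Set (Set Q)}

theorem upw_mem_iff_of_profile_eq (hL : ∀ w, w ∈ L ↔ infSet (runOf δ q0 w) ∈ α)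
    (u : List A) {E s Y : List A} (hE : E ≠ []) (hEidem : profile δ (E ++ E) = profile δ E)
    (hFidem : profile δ (E ++ s ++ (E ++ s)) = profile δ (E ++ s))
    (hback : profile δ (E ++ s ++ Y) = profile δ E) :
    upw u (E ++ s) ∈ L ↔ upw u E ∈ L := by
  set F := E ++ s
  have hF : F ≠ [] := by simp [F, hE]
  rw [profile_eq_iff] at hEidem hFidem hback
  set p := readWord δ q0 u
  set qe := readWord δ p E
  set qf := readWord δ p F
  have hvisited : ∀ q, visited δ q F = visited δ q E := fun q =>
    ((hback q).2 ▸ visited_subset_append q F Y).antisymm (visited_subset_append q E s)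
  have hqe : readWord δ qe F = qf := by
    simp only [qe, qf, F, ← readWord_append, ← List.append_assoc]
    rw [readWord_append p (E ++ E), (hEidem p).1, ← readWord_append]
  have hqf : readWord δ qf E = qe := by
    rw [← (hback qf).1, ← readWord_append, ← List.append_assoc, readWord_append p (F ++ F),
      (hFidem p).1, ← readWord_append, (hback p).1]
  have hcycle : visited δ qe E = visited δ qf F :=
    ((visited_subset_of_readWord_eq (fun q => (hEidem q).2) hqf).trans (hvisited qf).ge).antisymm
      ((visited_subset_of_readWord_eq (fun q => (hFidem q).2) hqe).trans (hvisited qe).le)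
  rw [hL, hL, infSet_runOf_upw q0 u hF (fun q => (hFidem q).1),
    infSet_runOf_upw q0 u hE (fun q => (hEidem q).1), hcycle]

theorem exists_colorAtMost_le_of_idempotent [Finite Q]
    (hL : ∀ w, w ∈ L ↔ infSet (runOf δ q0 w) ∈ α) (u : List A) (n : ℕ) :
    ∀ E : List A, (extensionProfiles δ E).ncard = n → E ≠ [] →
      profile δ (E ++ E) = profile δ E → ∃ c ≤ 2 * n + 1, ColorAtMost L u c E := by
  induction n using Nat.strong_induction_on with
  | _ n IH =>
  intro E hn hE hEidem
  obtain ⟨c, hnc, hc, hparity⟩ :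
      ∃ c, 2 * n ≤ c ∧ c ≤ 2 * n + 1 ∧ (upw u E ∈ L ↔ Even c) := by
    by_cases hmem : upw u E ∈ L
    · exact ⟨2 * n, le_rfl, by omega, iff_of_true hmem (even_two_mul n)⟩
    · exact ⟨2 * n + 1, by omega, le_rfl, iff_of_false hmem (Nat.not_even_two_mul_add_one n)⟩
  refine ⟨c, hc, ?_⟩
  rw [ColorAtMost]
  intro z _
  obtain ⟨i, hi, hFidem⟩ := exists_profile_wrep_idempotent δ (E ++ z)
  obtain ⟨k, rfl⟩ := Nat.exists_eq_add_one_of_ne_zero hi.ne'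
  have hF : wrep (E ++ z) (k + 1) = E ++ (z ++ wrep (E ++ z) k) := by
    rw [wrep_succ, List.append_assoc]
  by_cases hback : profile δ E ∈ extensionProfiles δ (wrep (E ++ z) (k + 1))
  · obtain ⟨Y, hY⟩ := hback
    rw [hF] at hY hFidem
    left
    rw [← upw_wrep u _ hi, hF, upw_mem_iff_of_profile_eq hL u hE hEidem hFidem hY]
    exact hparity
  · have hsub : extensionProfiles δ (wrep (E ++ z) (k + 1)) ⊂ extensionProfiles δ E := by
      refine ⟨hF ▸ extensionProfiles_append_subset E _, fun hsup => hback (hsup ?_)⟩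
      exact ⟨[], by simp only [List.append_nil]⟩
    have hlt := hn ▸ Set.ncard_lt_ncard hsub (Set.toFinite _)
    obtain ⟨c', hc', hcol⟩ := IH _ hlt _ rfl (wrep_ne_nil (by simp [hE]) hi) hFidem
    exact Or.inr ⟨k + 1, hi, ⟨c', by omega⟩, hcol⟩

end Automaton

section NaturalColor

variable {A : Type} [Inhabited A] {L : Set (ℕ → A)}

theorem exists_colorAtMost (hreg : OmegaRegular L) (u : List A) {v : List A} (hv : v ≠ []) :
    ∃ c, ColorAtMost L u c v := by
  obtain ⟨Q, _, q0, δ, α, hL⟩ := hreg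
  refine ⟨2 * Nat.card (Q → Q × Set Q) + 2, ?_⟩
  rw [ColorAtMost]
  intro z _
  obtain ⟨i, hi, hidem⟩ := exists_profile_wrep_idempotent δ (v ++ z)
  obtain ⟨c, hc, hcol⟩ := exists_colorAtMost_le_of_idempotent hL u _ _ rfl
    (wrep_ne_nil (by simp [hv]) hi) hidem
  have hcard := Set.ncard_le_card (extensionProfiles δ (wrep (v ++ z) i))
  exact Or.inr ⟨i, hi, ⟨c, by omega⟩, hcol⟩

theorem ncol_append_le (hreg : OmegaRegular L) {u x y : List A} (h : simL L u (x ++ y))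
    {v : List A} (hv : v ≠ []) : ncol L x (y ++ v) ≤ ncol L u v := by
  unfold ncol
  split_ifs with hx hu
  · obtain ⟨c, hc⟩ := exists_colorAtMost hreg u hv
    have hmin : ColorAtMost L u (sInf {c | ColorAtMost L u c v}) v :=
      Nat.sInf_mem (s := {c | ColorAtMost L u c v}) ⟨c, hc⟩
    exact WithBot.coe_le_coe.mpr (Nat.sInf_le (hmin.of_simL_append h))
  · exact absurd (hx.of_simL_append h) hu
  all_goals exact bot_le

end NaturalColor

/-- less is more: if `u ∼_L xy` then `col_u(v) ≥ col_x(yv)`; in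
particular, if `y` is `u`-invariant then `col_u(v) ≥ col_u(yv)`. -/
theorem less_is_more {A : Type} [Inhabited A] (L : Set (ℕ → A))
    (hreg : OmegaRegular L) (u x y : List A) (h : simL L u (x ++ y)) :
    (∀ v : List A, v ≠ [] → ncol L x (y ++ v) ≤ ncol L u v) ∧
    (UInv L u y → ∀ v : List A, v ≠ [] → ncol L u (y ++ v) ≤ ncol L u v) :=
  ⟨fun _ hv => ncol_append_le hreg h hv, fun hy _ hv => ncol_append_le hreg hy hv⟩
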